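/- arXiv:1911.11172 — 2 statements merged into one kernel-verified Lean document; each statement's English description precedes it below -/
import Mathlib

section
/- Let X, Y ⊆ S_n be subsets such that the multiplication map X × Y → S_n is a length-additive bijection. Then there exist x₀ ∈ X and y₀ ∈ Y with x₀y₀ = w₀ such that x₀ is the unique maximal element of X in left weak order, y₀ is the unique maximal element of Y in right weak order, and moreover X ⊆ {x : x ≤_L x₀} and Y ⊆ {y : y ≤_R y₀}. -/
namespace SepPaper

/-- Number of inversions of a permutation of `Fin n`, i.e. its Coxeter length. -/
def invLen {n : ℕ} (w : Equiv.Perm (Fin n)) : ℕ :=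
  (Finset.univ.filter fun p : Fin n × Fin n => p.1 < p.2 ∧ w p.2 < w p.1).card

/-- Right weak order. -/
def leR {n : ℕ} (v u : Equiv.Perm (Fin n)) : Prop :=
  invLen v + invLen (v⁻¹ * u) = invLen u

/-- Left weak order. -/
def leL {n : ℕ} (v u : Equiv.Perm (Fin n)) : Prop :=
  invLen v + invLen (u * v⁻¹) = invLen u

instance {n : ℕ} (v u : Equiv.Perm (Fin n)) : Decidable (leR v u) :=
  inferInstanceAs (Decidable (_ = _))

instance {n : ℕ} (v u : Equiv.Perm (Fin n)) : Decidable (leL v u) :=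
  inferInstanceAs (Decidable (_ = _))

/-- The permutation 3142 (one-indexed) as a permutation of `Fin 4`. -/
def perm3142 : Equiv.Perm (Fin 4) :=
  ⟨![2, 0, 3, 1], ![1, 3, 0, 2], by decide, by decide⟩

/-- The permutation 2413 (one-indexed) as a permutation of `Fin 4`. -/
def perm2413 : Equiv.Perm (Fin 4) :=
  ⟨![1, 3, 0, 2], ![2, 0, 3, 1], by decide, by decide⟩

/-- `w` contains the pattern `σ`. -/
def ContainsPattern {n k : ℕ} (w : Equiv.Perm (Fin n)) (σ : Equiv.Perm (Fin k)) : Prop :=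
  ∃ f : Fin k → Fin n, StrictMono f ∧ ∀ a b : Fin k, σ a < σ b ↔ w (f a) < w (f b)

/-- A permutation is separable if it avoids 3142 and 2413. -/
def Separable {n : ℕ} (w : Equiv.Perm (Fin n)) : Prop :=
  ¬ ContainsPattern w perm3142 ∧ ¬ ContainsPattern w perm2413

/-- The longest element `w₀` of `S_n`, `i ↦ n+1-i` (one-indexed). -/
def w0 (n : ℕ) : Equiv.Perm (Fin n) :=
  ⟨Fin.rev, Fin.rev, Fin.rev_rev, Fin.rev_rev⟩


lemma invLen_inv {n : ℕ} (w : Equiv.Perm (Fin n)) : invLen w⁻¹ = invLen w := by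
  unfold invLen
  apply Finset.card_bij' (fun p _ => (w⁻¹ p.2, w⁻¹ p.1)) (fun q _ => (w q.2, w q.1))
  · intro p hp
    simp only [Finset.mem_filter, Finset.mem_univ, true_and] at hp ⊢
    refine ⟨hp.2, ?_⟩
    simpa using hp.1
  · intro q hq
    simp only [Finset.mem_filter, Finset.mem_univ, true_and] at hq ⊢
    refine ⟨hq.2, ?_⟩
    simpa using hq.1
  · intro p hp; simp
  · intro q hq; simp

lemma invLen_w0_mul {n : ℕ} (u : Equiv.Perm (Fin n)) :
    invLen (w0 n * u) + invLen u = invLen (w0 n) := by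
  have hrev : ∀ a b : Fin n, (w0 n) a < (w0 n) b ↔ b < a := by
    intro a b; exact Fin.rev_lt_rev
  have h1 : invLen (w0 n * u)
      = ((Finset.univ.filter fun p : Fin n × Fin n => p.1 < p.2).filter
          fun p => u p.1 < u p.2).card := by
    unfold invLen
    rw [Finset.filter_filter]
    congr 1
    apply Finset.filter_congr
    intro p _
    simp only [Equiv.Perm.mul_apply, hrev]
  have h2 : invLen u
      = ((Finset.univ.filter fun p : Fin n × Fin n => p.1 < p.2).filter
          fun p => ¬ u p.1 < u p.2).card := by
    unfold invLen
    rw [Finset.filter_filter]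
    congr 1
    apply Finset.filter_congr
    intro p _
    constructor
    · rintro ⟨h1, h2⟩; exact ⟨h1, not_lt_of_gt h2⟩
    · rintro ⟨h1, h2⟩
      refine ⟨h1, ?_⟩
      rcases lt_trichotomy (u p.2) (u p.1) with h | h | h
      · exact h
      · exact absurd (u.injective h) (ne_of_gt h1)
      · exact absurd h h2
  have h3 : invLen (w0 n)
      = (Finset.univ.filter fun p : Fin n × Fin n => p.1 < p.2).card := by
    unfold invLen
    congr 1
    apply Finset.filter_congr
    intro p _
    simp only [hrev]
    exact ⟨fun h => h.1, fun h => ⟨h, h⟩⟩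
  rw [h1, h2, h3]
  exact Finset.card_filter_add_card_filter_not _

lemma invLen_mul_w0 {n : ℕ} (u : Equiv.Perm (Fin n)) :
    invLen (u * w0 n) + invLen u = invLen (w0 n) := by
  have hw0 : (w0 n)⁻¹ = w0 n := rfl
  have := invLen_w0_mul (n := n) u⁻¹
  rw [← invLen_inv (u * w0 n)]
  have : (u * w0 n)⁻¹ = w0 n * u⁻¹ := by rw [mul_inv_rev, hw0]
  rw [this, ← invLen_inv u] at *
  exact invLen_w0_mul u⁻¹

/-- a splitting `(X, Y)` of `S_n` has unique maximal elements
`x₀ ∈ X` (in left weak order) and `y₀ ∈ Y` (in right weak order), with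
`x₀y₀ = w₀`, `X ⊆ {x : x ≤_L x₀}` and `Y ⊆ {y : y ≤_R y₀}`. -/
theorem stmt_5 {n : ℕ} (X Y : Set (Equiv.Perm (Fin n)))
    (hadd : ∀ x ∈ X, ∀ y ∈ Y, invLen (x * y) = invLen x + invLen y)
    (hbij : Function.Bijective
      (fun p : X × Y => (p.1 : Equiv.Perm (Fin n)) * (p.2 : Equiv.Perm (Fin n)))) :
    ∃ x₀ ∈ X, ∃ y₀ ∈ Y, x₀ * y₀ = w0 n ∧
      (∀ x ∈ X, leL x x₀) ∧ (∀ y ∈ Y, leR y y₀) := by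
  obtain ⟨⟨⟨x₀, hx₀⟩, ⟨y₀, hy₀⟩⟩, hprod⟩ := hbij.2 (w0 n)
  simp only at hprod
  refine ⟨x₀, hx₀, y₀, hy₀, hprod, ?_, ?_⟩
  · intro x hx
    have key : x₀ * x⁻¹ = w0 n * (x * y₀)⁻¹ := by
      rw [← hprod]; group
    have h1 := invLen_w0_mul ((x * y₀)⁻¹)
    rw [invLen_inv, hadd x hx y₀ hy₀] at h1
    have h2 : invLen (w0 n) = invLen x₀ + invLen y₀ := by
      rw [← hprod, hadd x₀ hx₀ y₀ hy₀]
    unfold leL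
    rw [key]
    omega
  · intro y hy
    have key : y⁻¹ * y₀ = (x₀ * y)⁻¹ * w0 n := by
      rw [← hprod]; group
    have h1 := invLen_mul_w0 ((x₀ * y)⁻¹)
    rw [invLen_inv (x₀ * y), hadd x₀ hx₀ y hy] at h1
    have h2 : invLen (w0 n) = invLen x₀ + invLen y₀ := by
      rw [← hprod, hadd x₀ hx₀ y₀ hy₀]
    unfold leR
    rw [key]
    omega

end SepPaper
end

section
/- Let w ∈ S_n be minimal non-separable, i.e., w contains 3142 or 2413, but both the subsequence w(1),…,w(n−1) and the subsequence w(2),…,w(n) avoid the patterns 3142 and 2413. If w(1) < w(n), then: w(i) > w(n) for 2 ≤ i ≤ n+1−w(n); w(1) < w(i) < w(n) for n+2−w(n) ≤ i ≤ n−w(1); and w(i) < w(1) for n−w(1)+1 ≤ i ≤ n−1. Likewise, if w(1) > w(n), then: w(i) < w(n) for 2 ≤ i ≤ w(n); w(n) < w(i) < w(1) for w(n)+1 ≤ i ≤ w(1)−1; and w(i) > w(1) for w(1) ≤ i ≤ n−1. -/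
namespace SepPaper

/-- `w` contains the pattern `σ` using only indices from `S`. -/
def ContainsPatternOn {n k : ℕ} (w : Equiv.Perm (Fin n)) (σ : Equiv.Perm (Fin k))
    (S : Set (Fin n)) : Prop :=
  ∃ f : Fin k → Fin n, StrictMono f ∧ (∀ a, f a ∈ S) ∧
    ∀ a b : Fin k, σ a < σ b ↔ w (f a) < w (f b)

/-- `w` is minimal non-separable: `w` contains 3142 or 2413, but both the subsequence
`w(1),…,w(n-1)` (indices `< n-1`, zero-indexed) and the subsequence `w(2),…,w(n)`
(indices `≥ 1`, zero-indexed) avoid 3142 and 2413. -/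
def MinimalNonSeparable {n : ℕ} (w : Equiv.Perm (Fin n)) : Prop :=
  (ContainsPattern w perm3142 ∨ ContainsPattern w perm2413) ∧
  ¬ ContainsPatternOn w perm3142 {i | (i : ℕ) < n - 1} ∧
  ¬ ContainsPatternOn w perm2413 {i | (i : ℕ) < n - 1} ∧
  ¬ ContainsPatternOn w perm3142 {i | 1 ≤ (i : ℕ)} ∧
  ¬ ContainsPatternOn w perm2413 {i | 1 ≤ (i : ℕ)}

/-!
Write `F = w(1)` and `L = w(n)`. Complementing all values swaps 3142 and 2413 and preserves
minimality, so it suffices to treat `F < L`. By minimality every occurrence of 3142 or 2413 uses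
both the first and the last position; as `F < L` it is a 2413, which provides an interior value
`> L` before an interior value `< F`. Playing this pair against an interior pair "small before
big", "middle before big" or "small before middle" always produces an occurrence that misses the
first or the last position. So between the endpoints `w` lists the `n - L` values above `L`, then
the values between `F` and `L`, then the `F - 1` values below `F`, and counting gives the bounds.
-/

section Patterns

variable {n k : ℕ}

lemma containsPatternOn_univ (w : Equiv.Perm (Fin n)) (σ : Equiv.Perm (Fin k)) :
    ContainsPatternOn w σ Set.univ ↔ ContainsPattern w σ := by
  simp [ContainsPatternOn, ContainsPattern]

lemma containsPatternOn_of_strictMono {w : Equiv.Perm (Fin n)} {σ : Equiv.Perm (Fin (k + 1))}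
    {S : Set (Fin n)} [S.OrdConnected] {f : Fin (k + 1) → Fin n} (hf : StrictMono f)
    (h₀ : f 0 ∈ S) (hₗ : f (Fin.last k) ∈ S) (hv : StrictMono fun j => w (f (σ.symm j))) :
    ContainsPatternOn w σ S := by
  refine ⟨f, hf, fun a => ?_, fun a b => ?_⟩
  · exact Set.Icc_subset S h₀ hₗ ⟨hf.monotone (Fin.zero_le a), hf.monotone (Fin.le_last a)⟩
  · simpa using (hv.lt_iff_lt (a := σ a) (b := σ b)).symm

lemma strictMono_vec4 {α : Type*} [Preorder α] {a b c d : α} (hab : a < b) (hbc : b < c)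
    (hcd : c < d) : StrictMono ![a, b, c, d] := by
  simp [Fin.strictMono_iff_lt_succ, Fin.forall_fin_succ, hab, hbc, hcd]

lemma containsPatternOn_w0_mul_iff (w : Equiv.Perm (Fin n)) (σ : Equiv.Perm (Fin k))
    (S : Set (Fin n)) :
    ContainsPatternOn (w0 n * w) (w0 k * σ) S ↔ ContainsPatternOn w σ S := by
  simp only [ContainsPatternOn, Equiv.Perm.mul_apply, w0, Equiv.coe_fn_mk, Fin.rev_lt_rev]
  exact exists_congr fun f => and_congr_right fun _ => and_congr_right fun _ => forall_comm

lemma w0_mul_perm3142 : w0 4 * perm3142 = perm2413 := by decide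
lemma w0_mul_perm2413 : w0 4 * perm2413 = perm3142 := by decide

end Patterns

section Counting

open Finset

variable {n : ℕ}

lemma card_filter_lt_apply (w : Equiv.Perm (Fin n)) (c : Fin n) :
    #{i | c < w i} = n - 1 - c := by
  rw [← Fin.card_Ioi c]
  exact card_equiv w (by simp)

lemma card_filter_apply_lt (w : Equiv.Perm (Fin n)) (c : Fin n) :
    #{i | w i < c} = c := by
  rw [← Fin.card_Iio c]
  exact card_equiv w (by simp)

lemma mem_iff_val_le_add_card {S : Finset (Fin n)} {a i : Fin n} (hS : ∀ j ∈ S, a < j)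
    (hdown : ∀ j ∈ S, ∀ x, a < x → x < j → x ∈ S) (hi : a < i) :
    i ∈ S ↔ (i : ℕ) ≤ a + #S := by
  constructor
  · intro h
    have hsub : Ioc a i ⊆ S := fun x hx => by
      obtain ⟨hax, hxi⟩ := mem_Ioc.1 hx
      rcases hxi.lt_or_eq with hxi | rfl
      exacts [hdown i h x hax hxi, h]
    have := card_le_card hsub
    rw [Fin.card_Ioc] at this
    omega
  · intro h
    by_contra hni
    have hsub : S ⊆ Ioo a i := fun j hj =>
      mem_Ioo.2 ⟨hS j hj, lt_of_not_ge fun hij =>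
        hni (hij.lt_or_eq.elim (hdown j hj i hi) (· ▸ hj))⟩
    have := card_le_card hsub
    rw [Fin.card_Ioo] at this
    rw [Fin.lt_def] at hi
    omega

lemma mem_iff_le_val_add_card {S : Finset (Fin n)} {b i : Fin n} (hS : ∀ j ∈ S, j < b)
    (hup : ∀ j ∈ S, ∀ x, j < x → x < b → x ∈ S) (hi : i < b) :
    i ∈ S ↔ (b : ℕ) ≤ i + #S := by
  constructor
  · intro h
    have hsub : Ico i b ⊆ S := fun x hx => by
      obtain ⟨hix, hxb⟩ := mem_Ico.1 hx
      rcases hix.lt_or_eq with hix | rfl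
      exacts [hup i h x hix hxb, h]
    have := card_le_card hsub
    rw [Fin.card_Ico] at this
    omega
  · intro h
    by_contra hni
    have hsub : S ⊆ Ioo i b := fun j hj =>
      mem_Ioo.2 ⟨lt_of_not_ge fun hji =>
        hni (hji.lt_or_eq.elim (hup j hj i · hi) (· ▸ hj)), hS j hj⟩
    have := card_le_card hsub
    rw [Fin.card_Ioo] at this
    rw [Fin.lt_def] at hi
    omega

end Counting

section Occurrences

variable {n : ℕ} (w : Equiv.Perm (Fin n))

def Occurs3142 (a b c d : Fin n) : Prop :=
  a < b ∧ b < c ∧ c < d ∧ w b < w d ∧ w d < w a ∧ w a < w c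

def Occurs2413 (a b c d : Fin n) : Prop :=
  a < b ∧ b < c ∧ c < d ∧ w c < w a ∧ w a < w d ∧ w d < w b

variable {w}

lemma Occurs3142.containsPatternOn {a b c d : Fin n} (h : Occurs3142 w a b c d)
    {S : Set (Fin n)} [S.OrdConnected] (ha : a ∈ S) (hd : d ∈ S) :
    ContainsPatternOn w perm3142 S := by
  obtain ⟨hab, hbc, hcd, h₁, h₂, h₃⟩ := h
  refine containsPatternOn_of_strictMono (strictMono_vec4 hab hbc hcd) ha hd ?_
  convert strictMono_vec4 h₁ h₂ h₃ using 1
  funext j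
  fin_cases j <;> rfl

lemma Occurs2413.containsPatternOn {a b c d : Fin n} (h : Occurs2413 w a b c d)
    {S : Set (Fin n)} [S.OrdConnected] (ha : a ∈ S) (hd : d ∈ S) :
    ContainsPatternOn w perm2413 S := by
  obtain ⟨hab, hbc, hcd, h₁, h₂, h₃⟩ := h
  refine containsPatternOn_of_strictMono (strictMono_vec4 hab hbc hcd) ha hd ?_
  convert strictMono_vec4 h₁ h₂ h₃ using 1
  funext j
  fin_cases j <;> rfl

lemma exists_occurs3142 (h : ContainsPattern w perm3142) :
    ∃ a b c d, Occurs3142 w a b c d := by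
  obtain ⟨f, hf, hp⟩ := h
  exact ⟨f 0, f 1, f 2, f 3, hf (by decide), hf (by decide), hf (by decide),
    (hp 1 3).1 (by decide), (hp 3 0).1 (by decide), (hp 0 2).1 (by decide)⟩

lemma exists_occurs2413 (h : ContainsPattern w perm2413) :
    ∃ a b c d, Occurs2413 w a b c d := by
  obtain ⟨f, hf, hp⟩ := h
  exact ⟨f 0, f 1, f 2, f 3, hf (by decide), hf (by decide), hf (by decide),
    (hp 2 0).1 (by decide), (hp 0 3).1 (by decide), (hp 3 1).1 (by decide)⟩

end Occurrences

section Minimal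

open Finset

variable {n : ℕ} {w : Equiv.Perm (Fin n)} {first last : Fin n}

lemma le_of_val_eq_zero (hf : (first : ℕ) = 0) (i : Fin n) : first ≤ i :=
  Fin.le_iff_val_le_val.2 (by omega)

lemma le_of_val_eq_sub_one (hl : (last : ℕ) = n - 1) (i : Fin n) : i ≤ last :=
  Fin.le_iff_val_le_val.2 (by omega)

lemma setOf_val_lt_sub_one_eq_Iio (hl : (last : ℕ) = n - 1) :
    {i : Fin n | (i : ℕ) < n - 1} = Set.Iio last := by
  ext i
  simp [Fin.lt_def, hl]

lemma setOf_one_le_val_eq_Ioi (hf : (first : ℕ) = 0) :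
    {i : Fin n | 1 ≤ (i : ℕ)} = Set.Ioi first := by
  ext i
  simp [Fin.lt_def, hf, Nat.one_le_iff_ne_zero, Nat.pos_iff_ne_zero]

lemma eq_and_eq_of_forall_containsPatternOn {k : ℕ} {σ : Equiv.Perm (Fin k)} {a d : Fin n}
    (hf : (first : ℕ) = 0) (hl : (last : ℕ) = n - 1) (had : a ≤ d)
    (hpre : ¬ ContainsPatternOn w σ (Set.Iio last))
    (hsuf : ¬ ContainsPatternOn w σ (Set.Ioi first))
    (h : ∀ S : Set (Fin n), [S.OrdConnected] → a ∈ S → d ∈ S → ContainsPatternOn w σ S) :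
    a = first ∧ d = last := by
  constructor
  · by_contra hne
    have ha : first < a := (le_of_val_eq_zero hf a).lt_of_ne' hne
    exact hsuf (h _ ha (ha.trans_le had))
  · by_contra hne
    have hd : d < last := (le_of_val_eq_sub_one hl d).lt_of_ne hne
    exact hpre (h _ (had.trans_lt hd) hd)

lemma MinimalNonSeparable.eq_of_occurs3142 (hw : MinimalNonSeparable w)
    (hf : (first : ℕ) = 0) (hl : (last : ℕ) = n - 1) {a b c d : Fin n}
    (h : Occurs3142 w a b c d) : a = first ∧ d = last := by
  rw [MinimalNonSeparable, setOf_val_lt_sub_one_eq_Iio hl, setOf_one_le_val_eq_Ioi hf] at hw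
  exact eq_and_eq_of_forall_containsPatternOn hf hl (h.1.trans (h.2.1.trans h.2.2.1)).le
    hw.2.1 hw.2.2.2.1 fun _ _ ha hd => h.containsPatternOn ha hd

lemma MinimalNonSeparable.eq_of_occurs2413 (hw : MinimalNonSeparable w)
    (hf : (first : ℕ) = 0) (hl : (last : ℕ) = n - 1) {a b c d : Fin n}
    (h : Occurs2413 w a b c d) : a = first ∧ d = last := by
  rw [MinimalNonSeparable, setOf_val_lt_sub_one_eq_Iio hl, setOf_one_le_val_eq_Ioi hf] at hw
  exact eq_and_eq_of_forall_containsPatternOn hf hl (h.1.trans (h.2.1.trans h.2.2.1)).le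
    hw.2.2.1 hw.2.2.2.2 fun _ _ ha hd => h.containsPatternOn ha hd

lemma MinimalNonSeparable.exists_big_lt_small (hw : MinimalNonSeparable w)
    (hf : (first : ℕ) = 0) (hl : (last : ℕ) = n - 1) (hFL : w first < w last) :
    ∃ a b, first < a ∧ a < b ∧ b < last ∧ w last < w a ∧ w b < w first := by
  rcases hw.1 with h | h
  · obtain ⟨a, b, c, d, hocc⟩ := exists_occurs3142 h
    obtain ⟨rfl, rfl⟩ := hw.eq_of_occurs3142 hf hl hocc
    exact absurd (hocc.2.2.2.2.1.trans hFL) (lt_irrefl _)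
  · obtain ⟨a, b, c, d, hocc⟩ := exists_occurs2413 h
    obtain ⟨rfl, rfl⟩ := hw.eq_of_occurs2413 hf hl hocc
    obtain ⟨hab, hbc, hcd, hca, -, hdb⟩ := hocc
    exact ⟨b, c, hab, hbc, hcd, hdb, hca⟩

lemma MinimalNonSeparable.not_small_lt_big (hw : MinimalNonSeparable w)
    (hf : (first : ℕ) = 0) (hl : (last : ℕ) = n - 1) (hFL : w first < w last) {p q : Fin n}
    (hp : first < p) (hq : q < last) (hps : w p < w first) (hqb : w last < w q) : ¬ p < q := by
  intro hpq
  obtain ⟨a, b, ha, hab, hb, hab_big, hb_small⟩ := hw.exists_big_lt_small hf hl hFL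
  rcases lt_trichotomy b q with hbq | rfl | hqb'
  · rcases lt_or_gt_of_ne (w.injective.ne (hab.trans hbq).ne) with hv | hv
    · exact ha.ne' (hw.eq_of_occurs3142 hf hl
        ⟨hab, hbq, hq, hb_small.trans hFL, hab_big, hv⟩).1
    · exact hq.ne (hw.eq_of_occurs2413 hf hl
        ⟨ha, hab, hbq, hb_small, hFL.trans hqb, hv⟩).2
  · exact lt_asymm hqb (hb_small.trans hFL)
  · rcases lt_or_gt_of_ne (w.injective.ne (hpq.trans hqb').ne) with hv | hv
    · exact hb.ne (hw.eq_of_occurs3142 hf hl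
        ⟨hp, hpq, hqb', hv, hb_small, hFL.trans hqb⟩).2
    · exact hp.ne' (hw.eq_of_occurs2413 hf hl
        ⟨hpq, hqb', hb, hv, hps.trans hFL, hqb⟩).1

lemma MinimalNonSeparable.not_middle_lt_big (hw : MinimalNonSeparable w)
    (hf : (first : ℕ) = 0) (hl : (last : ℕ) = n - 1) (hFL : w first < w last) {p q : Fin n}
    (hp : first < p) (hq : q < last) (hpm : w first < w p) (hpm' : w p < w last)
    (hqb : w last < w q) : ¬ p < q := by
  intro hpq
  obtain ⟨a, b, ha, hab, hb, -, hb_small⟩ := hw.exists_big_lt_small hf hl hFL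
  rcases lt_trichotomy q b with hqb' | rfl | hbq
  · exact hp.ne' (hw.eq_of_occurs2413 hf hl
      ⟨hpq, hqb', hb, hb_small.trans hpm, hpm', hqb⟩).1
  · exact lt_asymm hqb (hb_small.trans hFL)
  · exact hw.not_small_lt_big hf hl hFL (ha.trans hab) hq hb_small hqb hbq

lemma MinimalNonSeparable.not_small_lt_middle (hw : MinimalNonSeparable w)
    (hf : (first : ℕ) = 0) (hl : (last : ℕ) = n - 1) (hFL : w first < w last) {p q : Fin n}
    (hp : first < p) (hq : q < last) (hps : w p < w first) (hqm : w first < w q)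
    (hqm' : w q < w last) : ¬ p < q := by
  intro hpq
  obtain ⟨a, b, ha, hab, hb, hab_big, -⟩ := hw.exists_big_lt_small hf hl hFL
  rcases lt_trichotomy a p with hap | rfl | hpa
  · exact hq.ne (hw.eq_of_occurs2413 hf hl
      ⟨ha, hap, hpq, hps, hqm, hqm'.trans hab_big⟩).2
  · exact lt_asymm hab_big (hps.trans hFL)
  · exact hw.not_small_lt_big hf hl hFL hp (hab.trans hb) hps hab_big hpa

lemma MinimalNonSeparable.big_of_lt_big (hw : MinimalNonSeparable w)
    (hf : (first : ℕ) = 0) (hl : (last : ℕ) = n - 1) (hFL : w first < w last) {p q : Fin n}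
    (hp : first < p) (hpq : p < q) (hq : q < last) (hqb : w last < w q) : w last < w p := by
  by_contra hpb
  have hpL : w p < w last :=
    (not_lt.1 hpb).lt_of_ne (w.injective.ne (hpq.trans hq).ne)
  rcases lt_or_gt_of_ne (w.injective.ne hp.ne') with hps | hpm
  · exact hw.not_small_lt_big hf hl hFL hp hq hps hqb hpq
  · exact hw.not_middle_lt_big hf hl hFL hp hq hpm hpL hqb hpq

lemma MinimalNonSeparable.small_of_small_lt (hw : MinimalNonSeparable w)
    (hf : (first : ℕ) = 0) (hl : (last : ℕ) = n - 1) (hFL : w first < w last) {p q : Fin n}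
    (hp : first < p) (hpq : p < q) (hq : q < last) (hps : w p < w first) : w q < w first := by
  by_contra hqs
  have hqF : w first < w q :=
    (not_lt.1 hqs).lt_of_ne (w.injective.ne (hp.trans hpq).ne)
  rcases lt_or_gt_of_ne (w.injective.ne hq.ne) with hqm | hqb
  · exact hw.not_small_lt_middle hf hl hFL hp hq hps hqF hqm hpq
  · exact hw.not_small_lt_big hf hl hFL hp hq hps hqb hpq

lemma MinimalNonSeparable.big_iff (hw : MinimalNonSeparable w)
    (hf : (first : ℕ) = 0) (hl : (last : ℕ) = n - 1) (hFL : w first < w last) {i : Fin n}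
    (h₀ : first < i) (h₁ : i < last) : w last < w i ↔ (i : ℕ) + w last < n := by
  have key := mem_iff_val_le_add_card (S := {j | w last < w j})
    (fun j hj => (le_of_val_eq_zero hf j).lt_of_ne <| by
      rintro rfl
      exact lt_asymm (mem_filter.1 hj).2 hFL)
    (fun j hj k hk hkj => by
      have hjb := (mem_filter.1 hj).2
      have hj : j < last := (le_of_val_eq_sub_one hl j).lt_of_ne <| by
        rintro rfl
        exact lt_irrefl _ hjb
      exact mem_filter.2 ⟨mem_univ k, hw.big_of_lt_big hf hl hFL hk hkj hj hjb⟩) h₀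
  rw [mem_filter, card_filter_lt_apply] at key
  have := (w last).isLt
  simp only [mem_univ, true_and] at key
  omega

lemma MinimalNonSeparable.small_iff (hw : MinimalNonSeparable w)
    (hf : (first : ℕ) = 0) (hl : (last : ℕ) = n - 1) (hFL : w first < w last) {i : Fin n}
    (h₀ : first < i) (h₁ : i < last) : w i < w first ↔ n ≤ (i : ℕ) + w first + 1 := by
  have key := mem_iff_le_val_add_card (S := {j | w j < w first})
    (fun j hj => (le_of_val_eq_sub_one hl j).lt_of_ne <| by
      rintro rfl
      exact lt_asymm (mem_filter.1 hj).2 hFL)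
    (fun j hj k hjk hk => by
      have hjs := (mem_filter.1 hj).2
      have hj : first < j := (le_of_val_eq_zero hf j).lt_of_ne' <| by
        rintro rfl
        exact lt_irrefl _ hjs
      exact mem_filter.2 ⟨mem_univ k, hw.small_of_small_lt hf hl hFL hj hjk hk hjs⟩) h₁
  rw [mem_filter, card_filter_apply_lt] at key
  simp only [mem_univ, true_and] at key
  omega

lemma MinimalNonSeparable.w0_mul (hw : MinimalNonSeparable w) :
    MinimalNonSeparable (w0 n * w) := by
  have h3142 := containsPatternOn_w0_mul_iff w perm3142
  have h2413 := containsPatternOn_w0_mul_iff w perm2413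
  rw [w0_mul_perm3142] at h3142
  rw [w0_mul_perm2413] at h2413
  simp only [MinimalNonSeparable, ← containsPatternOn_univ, h3142, h2413] at hw ⊢
  tauto

lemma MinimalNonSeparable.interior_blocks (hw : MinimalNonSeparable w)
    (hf : (first : ℕ) = 0) (hl : (last : ℕ) = n - 1) (hFL : (w first : ℕ) < w last)
    {i : Fin n} (h₀ : 0 < (i : ℕ)) (h₁ : (i : ℕ) + 1 < n) :
    ((w last : ℕ) < w i ↔ (i : ℕ) + w last < n) ∧
      ((w i : ℕ) < w first ↔ n ≤ (i : ℕ) + w first + 1) ∧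
      (w i : ℕ) ≠ w first ∧ (w i : ℕ) ≠ w last := by
  have hi₀ : first < i := Fin.lt_def.2 (by omega)
  have hi₁ : i < last := Fin.lt_def.2 (by omega)
  exact ⟨Fin.lt_def.symm.trans (hw.big_iff hf hl hFL hi₀ hi₁),
    Fin.lt_def.symm.trans (hw.small_iff hf hl hFL hi₀ hi₁),
    Fin.val_injective.ne (w.injective.ne hi₀.ne'), Fin.val_injective.ne (w.injective.ne hi₁.ne)⟩

end Minimal

/-- All positions and values are translated to the one-indexed convention: the position of
`i : Fin n` is `(i : ℕ) + 1` and the value `w(i)` is `(w i : ℕ) + 1`; `first` and `lastIdx` are the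
first and last positions. -/
theorem stmt_8 {n : ℕ} (w : Equiv.Perm (Fin n)) (hw : MinimalNonSeparable w)
    (first lastIdx : Fin n) (hf : (first : ℕ) = 0) (hl : (lastIdx : ℕ) = n - 1) :
    (((w first : ℕ) + 1 < (w lastIdx : ℕ) + 1 →
      ∀ i : Fin n,
        (2 ≤ (i : ℕ) + 1 → (i : ℕ) + 1 ≤ n + 1 - ((w lastIdx : ℕ) + 1) →
          (w lastIdx : ℕ) + 1 < (w i : ℕ) + 1) ∧
        (n + 2 - ((w lastIdx : ℕ) + 1) ≤ (i : ℕ) + 1 → (i : ℕ) + 1 ≤ n - ((w first : ℕ) + 1) →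
          (w first : ℕ) + 1 < (w i : ℕ) + 1 ∧ (w i : ℕ) + 1 < (w lastIdx : ℕ) + 1) ∧
        (n - ((w first : ℕ) + 1) + 1 ≤ (i : ℕ) + 1 → (i : ℕ) + 1 ≤ n - 1 →
          (w i : ℕ) + 1 < (w first : ℕ) + 1)) ∧
    ((w lastIdx : ℕ) + 1 < (w first : ℕ) + 1 →
      ∀ i : Fin n,
        (2 ≤ (i : ℕ) + 1 → (i : ℕ) + 1 ≤ (w lastIdx : ℕ) + 1 →
          (w i : ℕ) + 1 < (w lastIdx : ℕ) + 1) ∧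
        ((w lastIdx : ℕ) + 1 + 1 ≤ (i : ℕ) + 1 → (i : ℕ) + 1 ≤ ((w first : ℕ) + 1) - 1 →
          (w lastIdx : ℕ) + 1 < (w i : ℕ) + 1 ∧ (w i : ℕ) + 1 < (w first : ℕ) + 1) ∧
        ((w first : ℕ) + 1 ≤ (i : ℕ) + 1 → (i : ℕ) + 1 ≤ n - 1 →
          (w first : ℕ) + 1 < (w i : ℕ) + 1))) := by
  have hFn := (w first).isLt
  have hLn := (w lastIdx).isLt
  refine ⟨fun hlt i => ?_, fun hlt i => ?_⟩
  · have key := fun h₀ h₁ => hw.interior_blocks hf hl (by omega) (i := i) h₀ h₁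
    refine ⟨fun _ _ => ?_, fun _ _ => ?_, fun _ _ => ?_⟩ <;>
      have := key (by omega) (by omega) <;> omega
  · have hrev : ∀ j, ((w0 n * w) j : ℕ) = n - 1 - w j :=
      fun j => (Fin.val_rev (w j)).trans (by omega)
    have key := fun h₀ h₁ =>
      hw.w0_mul.interior_blocks hf hl (by rw [hrev, hrev]; omega) (i := i) h₀ h₁
    simp only [hrev] at key
    have := (w i).isLt
    refine ⟨fun _ _ => ?_, fun _ _ => ?_, fun _ _ => ?_⟩ <;>
      have := key (by omega) (by omega) <;> omega

end SepPaper
end
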